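/- arXiv:1911.05302 — 5 statements merged into one kernel-verified Lean document; each statement's English description precedes it below -/
import Mathlib

section
/- Let A be a nonnegative tensor of order m and dimension n. If some eigenvalue λ of A has a positive eigenvector (all entries strictly positive), then λ equals the spectral radius ρ(A). -/
open Finset

/-- A `k`-uniform hypergraph on vertex set `Fin n`. -/
structure UniformHypergraph (n k : ℕ) where
  edges : Finset (Finset (Fin n))
  card_eq : ∀ e ∈ edges, e.card = k

namespace UniformHypergraph

variable {n k : ℕ}

/-- Degree of a vertex: the number of edges containing it. -/
def degree (G : UniformHypergraph n k) (i : Fin n) : ℕ :=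
  (G.edges.filter (fun e => i ∈ e)).card

/-- Maximum degree ∇ of the hypergraph. -/
def maxDegree (G : UniformHypergraph n k) : ℕ :=
  Finset.univ.sup G.degree

/-- The adjacency tensor: entry `1/(k-1)!` if the index tuple enumerates an edge. -/
noncomputable def adjTensor (G : UniformHypergraph n k) : (Fin k → Fin n) → ℝ :=
  fun f => if Finset.image f Finset.univ ∈ G.edges then 1 / (Nat.factorial (k - 1)) else 0

/-- The identity tensor `I`: 1 on the diagonal, 0 elsewhere. -/
noncomputable def idTensor (n k : ℕ) [NeZero k] : (Fin k → Fin n) → ℝ :=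
  fun f => if ∀ j, f j = f 0 then 1 else 0

/-- The degree (diagonal) tensor `D`. -/
noncomputable def degTensor (G : UniformHypergraph n k) [NeZero k] : (Fin k → Fin n) → ℝ :=
  fun f => if ∀ j, f j = f 0 then (G.degree (f 0) : ℝ) else 0

/-- The Laplacian tensor `L = D - A`. -/
noncomputable def lapTensor (G : UniformHypergraph n k) [NeZero k] : (Fin k → Fin n) → ℝ :=
  fun f => G.degTensor f - G.adjTensor f

end UniformHypergraph

/-- `(T x^{k-1})_i = ∑_{i₂,…,i_k} t_{i i₂ … i_k} x_{i₂} ⋯ x_{i_k}`. -/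
noncomputable def tapply {ι : Type*} [Fintype ι] [DecidableEq ι] {k : ℕ} [NeZero k]
    (T : (Fin k → ι) → ℝ) (x : ι → ℝ) : ι → ℝ :=
  fun i => ∑ g : Fin k → ι,
    if g 0 = i then T g * ∏ j ∈ Finset.univ.erase (0 : Fin k), x (g j) else 0

/-- `(λ, x)` is an eigenpair of `T` : `T x^{k-1} = λ x^{[k-1]}`, `x ≠ 0`. -/
def IsEigenpair {n k : ℕ} [NeZero k] (T : (Fin k → Fin n) → ℝ) (lam : ℝ)
    (x : Fin n → ℝ) : Prop :=
  x ≠ 0 ∧ tapply T x = fun i => lam * (x i) ^ (k - 1)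

/-- Complex version of `T x^{k-1}` for a real tensor `T`. -/
noncomputable def capply {n k : ℕ} [NeZero k] (T : (Fin k → Fin n) → ℝ) (x : Fin n → ℂ) : Fin n → ℂ :=
  fun i => ∑ g : Fin k → Fin n,
    if g 0 = i then (T g : ℂ) * ∏ j ∈ Finset.univ.erase (0 : Fin k), x (g j) else 0

/-- `lam` is a (complex) eigenvalue of the real tensor `T`. -/
def IsCEigenvalue {n k : ℕ} [NeZero k] (T : (Fin k → Fin n) → ℝ) (lam : ℂ) : Prop :=
  ∃ x : Fin n → ℂ, x ≠ 0 ∧ capply T x = fun i => lam * (x i) ^ (k - 1)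

/-- The spectral radius: the maximum modulus of eigenvalues of `T`. -/
noncomputable def specRad {n k : ℕ} [NeZero k] (T : (Fin k → Fin n) → ℝ) : ℝ :=
  sSup {r : ℝ | ∃ lam : ℂ, IsCEigenvalue T lam ∧ ‖lam‖ = r}

/-- Arc `(i,j)` of the directed graph associated with a nonnegative tensor. -/
def tensorArc {n k : ℕ} [NeZero k] (T : (Fin k → Fin n) → ℝ) (i j : Fin n) : Prop :=
  ∃ g : Fin k → Fin n, g 0 = i ∧ 0 < T g ∧ ∃ l : Fin k, l ≠ 0 ∧ g l = j

/-- A tensor is weakly irreducible if its associated digraph is strongly connected. -/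
def WeaklyIrreducible {n k : ℕ} [NeZero k] (T : (Fin k → Fin n) → ℝ) : Prop :=
  ∀ i j : Fin n, Relation.ReflTransGen (tensorArc T) i j

namespace UniformHypergraph

variable {n k : ℕ}

/-- Two vertices are adjacent if some edge contains both. -/
def adjRel (G : UniformHypergraph n k) (u v : Fin n) : Prop :=
  ∃ e ∈ G.edges, u ∈ e ∧ v ∈ e

/-- A hypergraph is connected if any two vertices are joined by a path. -/
def Connected (G : UniformHypergraph n k) : Prop :=
  ∀ u v : Fin n, Relation.ReflTransGen (G.adjRel) u v

/-- `V : Fin r → Finset (Fin n)` lists the connected components of `G`: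
the `V j` are nonempty, partition the vertex set, and each `V j` is exactly a
connectivity class. -/
def IsComponents (G : UniformHypergraph n k) {r : ℕ} (V : Fin r → Finset (Fin n)) : Prop :=
  (∀ i : Fin n, ∃! j : Fin r, i ∈ V j) ∧
  (∀ j : Fin r, (V j).Nonempty) ∧
  (∀ j : Fin r, ∀ u ∈ V j, ∀ v : Fin n,
    (v ∈ V j ↔ Relation.ReflTransGen (G.adjRel) u v))

end UniformHypergraph

/-- Principal subtensor of `T` indexed by the subset `S`. -/
noncomputable def subtensor {n k : ℕ} (T : (Fin k → Fin n) → ℝ) (S : Finset (Fin n)) :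
    (Fin k → {i // i ∈ S}) → ℝ :=
  fun f => T (fun j => (f j : Fin n))

/-- Restriction of a vector to the coordinates in `S`. -/
noncomputable def restrictVec {n : ℕ} (x : Fin n → ℝ) (S : Finset (Fin n)) : {i // i ∈ S} → ℝ :=
  fun i => x i

/-- Indicator vector of a subset. -/
noncomputable def indicator {n : ℕ} (S : Finset (Fin n)) : Fin n → ℝ :=
  fun j => if j ∈ S then 1 else 0

/-- `r` is the maximum number of linearly independent elements of `S`. -/
def maxLinIndep {V : Type*} [AddCommGroup V] [Module ℝ V] (S : Set V) (r : ℕ) : Prop :=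
  (∃ v : Fin r → V, (∀ i, v i ∈ S) ∧ LinearIndependent ℝ v) ∧
  (∀ (m : ℕ) (w : Fin m → V), (∀ i, w i ∈ S) → LinearIndependent ℝ w → m ≤ r)


/-- an eigenvalue of a nonnegative tensor with a positive eigenvector
equals the spectral radius. -/
theorem eigenvalue_with_positive_eigenvector_eq_specRad {n k : ℕ} [NeZero k]
    (T : (Fin k → Fin n) → ℝ) (hT : ∀ f, 0 ≤ T f) (lam : ℝ) (x : Fin n → ℝ)
    (hx : ∀ i, 0 < x i) (h : IsEigenpair T lam x) :
    lam = specRad T := by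
  classical
  -- basic setup
  obtain ⟨hxne, heig⟩ := h
  have hn : 0 < n := by
    rcases Nat.eq_zero_or_pos n with h0 | h0
    · exfalso; apply hxne; funext i; exact absurd i.2 (by omega)
    · exact h0
  obtain ⟨i0⟩ : Nonempty (Fin n) := ⟨⟨0, hn⟩⟩
  set e := k - 1 with he
  have hcard : (Finset.univ.erase (0 : Fin k)).card = e := by
    rw [Finset.card_erase_of_mem (Finset.mem_univ _), Finset.card_univ, Fintype.card_fin]
  -- lam is nonnegative
  have htapply_nonneg : ∀ i, 0 ≤ tapply T x i := by
    intro i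
    apply Finset.sum_nonneg
    intro g _
    split
    · exact mul_nonneg (hT g) (Finset.prod_nonneg fun j _ => (hx _).le)
    · exact le_rfl
  have hlam : 0 ≤ lam := by
    have h1 : tapply T x i0 = lam * (x i0) ^ e := by rw [heig]
    have h2 : 0 < (x i0) ^ e := pow_pos (hx i0) e
    nlinarith [htapply_nonneg i0]
  -- lam is a complex eigenvalue
  have hreal : ∀ (z : Fin n → ℝ) (i : Fin n),
      capply T (fun j => (z j : ℂ)) i = ((tapply T z i : ℝ) : ℂ) := by
    intro z i
    simp only [capply, tapply]
    push_cast [apply_ite (Complex.ofReal)]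
    rfl
  have hmem : lam ∈ {r : ℝ | ∃ l : ℂ, IsCEigenvalue T l ∧ ‖l‖ = r} := by
    refine ⟨(lam : ℂ), ⟨fun j => (x j : ℂ), ?_, ?_⟩, ?_⟩
    · intro hzero
      have := congrFun hzero i0
      simp only [Pi.zero_apply, Complex.ofReal_eq_zero] at this
      exact (hx i0).ne' this
    · funext i
      rw [hreal x i, heig]
      push_cast
      rfl
    · simp [Complex.norm_real, abs_of_nonneg hlam]
  -- any complex eigenvalue has modulus ≤ lam
  have hub : ∀ r ∈ {r : ℝ | ∃ l : ℂ, IsCEigenvalue T l ∧ ‖l‖ = r}, r ≤ lam := by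
    rintro r ⟨mu, ⟨y, hyne, hyeig⟩, rfl⟩
    -- choose i1 maximizing |y i| / x i
    obtain ⟨i1, -, hmax⟩ := Finset.exists_max_image Finset.univ
      (fun i => ‖y i‖ / x i) ⟨i0, Finset.mem_univ i0⟩
    set t := ‖y i1‖ / x i1 with ht
    have hxpos := hx i1
    have ht0 : 0 < t := by
      obtain ⟨j, hj⟩ : ∃ j, y j ≠ 0 := by
        by_contra hc
        push_neg at hc
        exact hyne (funext hc)
      have h1 : 0 < ‖y j‖ / x j :=
        div_pos (by simpa using hj) (hx j)
      exact lt_of_lt_of_le h1 (hmax j (Finset.mem_univ j))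
    have hbound : ∀ j, ‖y j‖ ≤ t * x j := by
      intro j
      have := hmax j (Finset.mem_univ j)
      rw [div_le_iff₀ (hx j)] at this
      linarith [this]
    have hyi1 : ‖y i1‖ = t * x i1 := by
      rw [ht, div_mul_cancel₀ _ hxpos.ne']
    -- key inequality chain
    have hLHS : ‖capply T y i1‖ = ‖mu‖ * (t * x i1) ^ e := by
      rw [hyeig]
      simp only [norm_mul, norm_pow, hyi1]
      rfl
    have hstep1 : ‖capply T y i1‖ ≤
        ∑ g : Fin k → Fin n, if g 0 = i1 then
          T g * ∏ j ∈ Finset.univ.erase (0 : Fin k), ‖y (g j)‖ else 0 := by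
      refine le_trans (norm_sum_le _ _) ?_
      apply Finset.sum_le_sum
      intro g _
      split
      · exact le_of_eq (by rw [norm_mul, Complex.norm_real, Real.norm_of_nonneg (hT g), norm_prod])
      · simp
    have hstep2 : (∑ g : Fin k → Fin n, if g 0 = i1 then
          T g * ∏ j ∈ Finset.univ.erase (0 : Fin k), ‖y (g j)‖ else 0) ≤
        ∑ g : Fin k → Fin n, if g 0 = i1 then
          T g * ∏ j ∈ Finset.univ.erase (0 : Fin k), (t * x (g j)) else 0 := by
      apply Finset.sum_le_sum
      intro g _
      split
      · refine mul_le_mul_of_nonneg_left ?_ (hT g)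
        refine Finset.prod_le_prod (fun j _ => norm_nonneg _) ?_
        intro j _
        exact hbound (g j)
      · exact le_rfl
    have hstep3 : (∑ g : Fin k → Fin n, if g 0 = i1 then
          T g * ∏ j ∈ Finset.univ.erase (0 : Fin k), (t * x (g j)) else 0) =
        t ^ e * (lam * (x i1) ^ e) := by
      have : ∀ g : Fin k → Fin n,
          (if g 0 = i1 then T g * ∏ j ∈ Finset.univ.erase (0 : Fin k), (t * x (g j)) else 0)
          = t ^ e * (if g 0 = i1 then
              T g * ∏ j ∈ Finset.univ.erase (0 : Fin k), x (g j) else 0) := by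
        intro g
        split
        · rw [Finset.prod_mul_distrib, Finset.prod_const, hcard]; ring
        · rw [mul_zero]
      rw [Finset.sum_congr rfl (fun g _ => this g), ← Finset.mul_sum]
      have : (∑ g : Fin k → Fin n, if g 0 = i1 then
          T g * ∏ j ∈ Finset.univ.erase (0 : Fin k), x (g j) else 0) = tapply T x i1 := rfl
      rw [this, heig]
    have hfinal : ‖mu‖ * (t * x i1) ^ e ≤ t ^ e * (lam * (x i1) ^ e) := by
      rw [← hLHS]
      exact le_trans hstep1 (le_of_le_of_eq hstep2 hstep3)
    have hpos : 0 < t ^ e * (x i1) ^ e := mul_pos (pow_pos ht0 e) (pow_pos hxpos e)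
    nlinarith [mul_pow t (x i1) e]
  -- conclude
  have hne : {r : ℝ | ∃ l : ℂ, IsCEigenvalue T l ∧ ‖l‖ = r}.Nonempty := ⟨lam, hmem⟩
  have hbdd : BddAbove {r : ℝ | ∃ l : ℂ, IsCEigenvalue T l ∧ ‖l‖ = r} := ⟨lam, hub⟩
  exact le_antisymm (le_csSup hbdd hmem) (csSup_le hne hub)
end

section
/- Let G be a connected k-uniform hypergraph with Laplacian tensor L_G. Then 0 is an eigenvalue of L_G and, up to positive scalar multiple, the all-ones vector is the unique nonnegative eigenvector of L_G corresponding to eigenvalue 0. Equivalently, the maximum number of linearly independent nonnegative eigenvectors of L_G corresponding to eigenvalue 0 is 1. -/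
open Finset

section Aux

open Finset

variable {n k : ℕ}

lemma inj_of_image (g : Fin k → Fin n) (e : Finset (Fin n)) (he : e.card = k)
    (hge : Finset.image g Finset.univ = e) : Function.Injective g := by
  have h1 : (Finset.univ.image g).card = (Finset.univ : Finset (Fin k)).card := by
    rw [hge, he, Finset.card_univ, Fintype.card_fin]
  have h2 := Finset.card_image_iff.mp h1
  rw [Finset.coe_univ] at h2
  exact Set.injOn_univ.mp h2

noncomputable def countEquiv [NeZero k] (i : Fin n) (e : Finset (Fin n)) (he : e.card = k)
    (hi : i ∈ e) :
    {g : Fin k → Fin n // g 0 = i ∧ Finset.image g Finset.univ = e} ≃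
      ({j : Fin k // j ≠ 0} ↪ {v : Fin n // v ∈ e.erase i}) where
  toFun g := ⟨fun j => ⟨g.1 j.1, by
      have hinj := inj_of_image g.1 e he g.2.2
      refine Finset.mem_erase.mpr ⟨?_, ?_⟩
      · intro hc
        exact j.2 (hinj (hc.trans g.2.1.symm))
      · have hm := Finset.mem_image_of_mem g.1 (Finset.mem_univ j.1)
        rwa [g.2.2] at hm⟩, by
      intro a b hab
      have hinj := inj_of_image g.1 e he g.2.2
      exact Subtype.ext (hinj (congrArg Subtype.val hab))⟩
  invFun h := ⟨fun j => if hj : j = 0 then i else (h ⟨j, hj⟩).1, by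
      refine ⟨by simp, ?_⟩
      have hcard : Fintype.card {j : Fin k // j ≠ 0} = Fintype.card {v : Fin n // v ∈ e.erase i} := by
        simp only [Fintype.card_subtype, Finset.filter_ne', Fintype.card_coe,
          Finset.filter_mem_eq_inter, Finset.univ_inter]
        rw [Finset.card_erase_of_mem (Finset.mem_univ _), Finset.card_erase_of_mem hi,
          Finset.card_univ, Fintype.card_fin, he]
      have hsur : Function.Surjective h :=
        ((Fintype.bijective_iff_injective_and_card h).mpr ⟨h.injective, hcard⟩).2
      apply Finset.Subset.antisymm
      · intro v hv
        simp only [Finset.mem_image] at hv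
        obtain ⟨j, -, hj⟩ := hv
        by_cases h0 : j = 0
        · subst h0
          rw [dif_pos rfl] at hj
          exact hj ▸ hi
        · rw [dif_neg h0] at hj
          exact hj ▸ (Finset.mem_of_mem_erase (h ⟨j, h0⟩).2)
      · intro v hv
        by_cases hvi : v = i
        · subst hvi
          refine Finset.mem_image.mpr ⟨0, Finset.mem_univ _, by simp⟩
        · obtain ⟨j, hj⟩ := hsur ⟨v, Finset.mem_erase.mpr ⟨hvi, hv⟩⟩
          refine Finset.mem_image.mpr ⟨j.1, Finset.mem_univ _, ?_⟩
          rw [dif_neg j.2, hj]⟩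
  left_inv g := by
    apply Subtype.ext
    funext j
    by_cases h0 : j = 0
    · subst h0
      simp [g.2.1]
    · simp [h0]
      rfl
  right_inv h := by
    ext j
    simp [j.2]

lemma count_fiber [NeZero k] (i : Fin n) (e : Finset (Fin n)) (he : e.card = k) (hi : i ∈ e) :
    (Finset.univ.filter
      (fun g : Fin k → Fin n => g 0 = i ∧ Finset.image g Finset.univ = e)).card =
      Nat.factorial (k - 1) := by
  classical
  have h1 := Fintype.card_congr (countEquiv i e he hi)
  rw [Fintype.card_embedding_eq] at h1
  have hα : Fintype.card {j : Fin k // j ≠ 0} = k - 1 := by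
    simp only [Fintype.card_subtype, Finset.filter_ne']
    rw [Finset.card_erase_of_mem (Finset.mem_univ _), Finset.card_univ, Fintype.card_fin]
  have hβ : Fintype.card {v : Fin n // v ∈ e.erase i} = k - 1 := by
    simp only [Fintype.card_coe]
    rw [Finset.card_erase_of_mem hi, he]
  rw [hα, hβ, Nat.descFactorial_self] at h1
  rw [← Fintype.card_subtype]
  exact h1

end Aux

section Aux2

open Finset

variable {n k : ℕ}

lemma lap_apply [NeZero k] (G : UniformHypergraph n k) (x : Fin n → ℝ) (i : Fin n) :
    tapply G.lapTensor x i =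
      (G.degree i : ℝ) * x i ^ (k - 1) -
        ∑ e ∈ G.edges.filter (fun e => i ∈ e), ∏ v ∈ e.erase i, x v := by
  classical
  have hcard0 : ((Finset.univ : Finset (Fin k)).erase 0).card = k - 1 := by
    rw [Finset.card_erase_of_mem (Finset.mem_univ _), Finset.card_univ, Fintype.card_fin]
  have hsplit : ∀ g : Fin k → Fin n,
      (if g 0 = i then G.lapTensor g * ∏ j ∈ Finset.univ.erase (0 : Fin k), x (g j) else 0) =
      (if g 0 = i then G.degTensor g * ∏ j ∈ Finset.univ.erase (0 : Fin k), x (g j) else 0)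
      - (if g 0 = i then G.adjTensor g * ∏ j ∈ Finset.univ.erase (0 : Fin k), x (g j) else 0) := by
    intro g
    simp only [UniformHypergraph.lapTensor]
    split_ifs <;> ring
  have hD : ∑ g : Fin k → Fin n,
      (if g 0 = i then G.degTensor g * ∏ j ∈ Finset.univ.erase (0 : Fin k), x (g j) else 0) =
      (G.degree i : ℝ) * x i ^ (k - 1) := by
    rw [Finset.sum_eq_single (fun _ => i)]
    · rw [if_pos rfl]
      have hd : G.degTensor (fun _ => i) = (G.degree i : ℝ) := by
        simp [UniformHypergraph.degTensor]
      rw [hd, Finset.prod_const, hcard0]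
    · intro g _ hg
      by_cases h0 : g 0 = i
      · have hne : ¬ ∀ j, g j = g 0 := fun hall => hg (funext fun j => (hall j).trans h0)
        rw [if_pos h0]
        have hz : G.degTensor g = 0 := by
          simp only [UniformHypergraph.degTensor]
          exact if_neg hne
        rw [hz, zero_mul]
      · rw [if_neg h0]
    · intro hmem
      exact absurd (Finset.mem_univ _) hmem
  have hA : ∑ g : Fin k → Fin n,
      (if g 0 = i then G.adjTensor g * ∏ j ∈ Finset.univ.erase (0 : Fin k), x (g j) else 0) =
      ∑ e ∈ G.edges.filter (fun e => i ∈ e), ∏ v ∈ e.erase i, x v := by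
    have step1 : ∀ g : Fin k → Fin n,
        (if g 0 = i then G.adjTensor g * ∏ j ∈ Finset.univ.erase (0 : Fin k), x (g j) else 0) =
        (if g 0 = i ∧ Finset.image g Finset.univ ∈ G.edges then
          (1 / (Nat.factorial (k - 1)) : ℝ) * ∏ j ∈ Finset.univ.erase (0 : Fin k), x (g j)
         else 0) := by
      intro g
      simp only [UniformHypergraph.adjTensor]
      split_ifs with h1 h2 h3 h4 h5 <;> simp_all <;> ring
    rw [Finset.sum_congr rfl (fun g _ => step1 g), ← Finset.sum_filter]
    have hmap : ∀ g ∈ Finset.univ.filter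
        (fun g : Fin k → Fin n => g 0 = i ∧ Finset.image g Finset.univ ∈ G.edges),
        Finset.image g Finset.univ ∈ G.edges.filter (fun e => i ∈ e) := by
      intro g hg
      rw [Finset.mem_filter] at hg ⊢
      exact ⟨hg.2.2, hg.2.1 ▸ Finset.mem_image_of_mem _ (Finset.mem_univ _)⟩
    rw [← Finset.sum_fiberwise_of_maps_to hmap]
    apply Finset.sum_congr rfl
    intro e heF
    rw [Finset.mem_filter] at heF
    obtain ⟨heE, hiE⟩ := heF
    have hecard : e.card = k := G.card_eq e heE
    have hterm : ∀ g ∈ (Finset.univ.filter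
        (fun g : Fin k → Fin n => g 0 = i ∧ Finset.image g Finset.univ ∈ G.edges)).filter
        (fun g => Finset.image g Finset.univ = e),
        (1 / (Nat.factorial (k - 1)) : ℝ) * ∏ j ∈ Finset.univ.erase (0 : Fin k), x (g j) =
        (1 / (Nat.factorial (k - 1)) : ℝ) * ∏ v ∈ e.erase i, x v := by
      intro g hg
      simp only [Finset.mem_filter, Finset.mem_univ, true_and] at hg
      obtain ⟨⟨hg0, -⟩, hge⟩ := hg
      have hinj := inj_of_image g e hecard hge
      have himg : Finset.image g (Finset.univ.erase (0 : Fin k)) = e.erase i := by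
        rw [Finset.image_erase hinj, hge, hg0]
      rw [← himg, Finset.prod_image (fun a _ b _ hab => hinj hab)]
    rw [Finset.sum_congr rfl hterm, Finset.sum_const]
    have hfib : (Finset.univ.filter
        (fun g : Fin k → Fin n => g 0 = i ∧ Finset.image g Finset.univ ∈ G.edges)).filter
        (fun g => Finset.image g Finset.univ = e) =
        Finset.univ.filter (fun g : Fin k → Fin n => g 0 = i ∧ Finset.image g Finset.univ = e) := by
      ext g
      simp only [Finset.mem_filter, Finset.mem_univ, true_and]
      constructor
      · rintro ⟨⟨h1, -⟩, h3⟩; exact ⟨h1, h3⟩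
      · rintro ⟨h1, h2⟩; exact ⟨⟨h1, h2 ▸ heE⟩, h2⟩
    rw [hfib, count_fiber i e hecard hiE, nsmul_eq_mul, ← mul_assoc, mul_one_div,
      div_self (by exact_mod_cast Nat.factorial_ne_zero (k-1)), one_mul]
  calc tapply G.lapTensor x i
      = ∑ g : Fin k → Fin n,
        ((if g 0 = i then G.degTensor g * ∏ j ∈ Finset.univ.erase (0 : Fin k), x (g j) else 0)
        - (if g 0 = i then G.adjTensor g * ∏ j ∈ Finset.univ.erase (0 : Fin k), x (g j) else 0)) := by
        rw [tapply]
        exact Finset.sum_congr rfl (fun g _ => hsplit g)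
    _ = _ := by rw [Finset.sum_sub_distrib, hD, hA]

end Aux2

/-- for a connected `k`-uniform hypergraph, 0 is an eigenvalue of `L_G`,
the all-ones vector is (up to positive scalar) the unique nonnegative eigenvector for
eigenvalue 0, and hence the geometry connectivity is 1. -/
theorem connected_geometry_connectivity_one {n k : ℕ} [NeZero k] (hk : 2 ≤ k)
    (hn : 0 < n) (G : UniformHypergraph n k) (h : G.Connected) :
    IsEigenpair G.lapTensor 0 (fun _ => (1 : ℝ)) ∧
    (∀ x : Fin n → ℝ, x ≠ 0 → (∀ i, 0 ≤ x i) → tapply G.lapTensor x = 0 →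
      ∃ c : ℝ, 0 < c ∧ x = fun _ => c) ∧
    maxLinIndep {x : Fin n → ℝ | x ≠ 0 ∧ (∀ i, 0 ≤ x i) ∧ tapply G.lapTensor x = 0} 1 := by
  classical
  have hone_ne : (fun _ : Fin n => (1 : ℝ)) ≠ 0 := by
    intro hc
    have := congrFun hc ⟨0, hn⟩
    norm_num at this
  have hone_zero : tapply G.lapTensor (fun _ => (1 : ℝ)) = 0 := by
    funext i
    rw [lap_apply]
    simp [UniformHypergraph.degree]
  have part1 : IsEigenpair G.lapTensor 0 (fun _ => (1 : ℝ)) := by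
    refine ⟨hone_ne, ?_⟩
    funext i
    rw [hone_zero]
    simp
  have part2 : ∀ x : Fin n → ℝ, x ≠ 0 → (∀ i, 0 ≤ x i) → tapply G.lapTensor x = 0 →
      ∃ c : ℝ, 0 < c ∧ x = fun _ => c := by
    intro x hx hnn hzero
    have heq : ∀ i, (G.degree i : ℝ) * x i ^ (k - 1) =
        ∑ e ∈ G.edges.filter (fun e => i ∈ e), ∏ v ∈ e.erase i, x v := by
      intro i
      have hz := congrFun hzero i
      rw [lap_apply] at hz
      simp only [Pi.zero_apply] at hz
      linarith [hz]
    have hne : (Finset.univ : Finset (Fin n)).Nonempty := ⟨⟨0, hn⟩, Finset.mem_univ _⟩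
    obtain ⟨u, -, hu⟩ := Finset.exists_max_image Finset.univ x hne
    set M := x u with hMdef
    have hM : ∀ v, x v ≤ M := fun v => hu v (Finset.mem_univ v)
    have hMpos : 0 < M := by
      by_contra hc
      push_neg at hc
      apply hx
      funext v
      have h1 := hnn v
      have h2 := hM v
      simp only [Pi.zero_apply]
      linarith
    have hclose : ∀ w, x w = M → ∀ e ∈ G.edges, w ∈ e → ∀ v ∈ e, x v = M := by
      intro w hw e heE hwE v hvE
      by_cases hvw : v = w
      · rw [hvw]; exact hw
      have hvErase : v ∈ e.erase w := Finset.mem_erase.mpr ⟨hvw, hvE⟩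
      have hprodle : ∀ e' ∈ G.edges.filter (fun e => w ∈ e),
          ∏ v' ∈ e'.erase w, x v' ≤ M ^ (k - 1) := by
        intro e' he'
        rw [Finset.mem_filter] at he'
        have hcard : (e'.erase w).card = k - 1 := by
          rw [Finset.card_erase_of_mem he'.2, G.card_eq e' he'.1]
        calc ∏ v' ∈ e'.erase w, x v' ≤ ∏ _v' ∈ e'.erase w, M :=
              Finset.prod_le_prod (fun _ _ => hnn _) (fun v' _ => hM v')
          _ = M ^ (k - 1) := by rw [Finset.prod_const, hcard]
      have hsum := heq w
      rw [hw] at hsum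
      have hall : ∀ e' ∈ G.edges.filter (fun e => w ∈ e),
          ∏ v' ∈ e'.erase w, x v' = M ^ (k - 1) := by
        by_contra hc
        push_neg at hc
        obtain ⟨e0, he0, hne0⟩ := hc
        have hlt : ∑ e' ∈ G.edges.filter (fun e => w ∈ e), ∏ v' ∈ e'.erase w, x v' <
            ∑ _e' ∈ G.edges.filter (fun e => w ∈ e), M ^ (k - 1) :=
          Finset.sum_lt_sum hprodle ⟨e0, he0, lt_of_le_of_ne (hprodle e0 he0) hne0⟩
        rw [Finset.sum_const, nsmul_eq_mul] at hlt
        have hdeg : (G.degree w : ℝ) = ((G.edges.filter (fun e => w ∈ e)).card : ℝ) := rfl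
        rw [← hsum, hdeg] at hlt
        exact lt_irrefl _ hlt
      have heF : e ∈ G.edges.filter (fun e => w ∈ e) := Finset.mem_filter.mpr ⟨heE, hwE⟩
      have hprod := hall e heF
      by_contra hxv
      have hxvlt : x v < M := lt_of_le_of_ne (hM v) hxv
      have hcard : (e.erase w).card = k - 1 := by
        rw [Finset.card_erase_of_mem hwE, G.card_eq e heE]
      have hcard2 : ((e.erase w).erase v).card = k - 2 := by
        rw [Finset.card_erase_of_mem hvErase, hcard]
        omega
      have h2 : ∏ v' ∈ (e.erase w).erase v, x v' ≤ M ^ (k - 2) := by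
        calc ∏ v' ∈ (e.erase w).erase v, x v' ≤ ∏ _v' ∈ (e.erase w).erase v, M :=
              Finset.prod_le_prod (fun _ _ => hnn _) (fun v' _ => hM v')
          _ = M ^ (k - 2) := by rw [Finset.prod_const, hcard2]
      have hstrict : ∏ v' ∈ e.erase w, x v' < M ^ (k - 1) := by
        rw [← Finset.mul_prod_erase _ _ hvErase]
        have e1 : x v * ∏ v' ∈ (e.erase w).erase v, x v' ≤ x v * M ^ (k - 2) :=
          mul_le_mul_of_nonneg_left h2 (hnn v)
        have e2 : x v * M ^ (k - 2) < M * M ^ (k - 2) :=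
          mul_lt_mul_of_pos_right hxvlt (pow_pos hMpos _)
        have e3 : M * M ^ (k - 2) = M ^ (k - 1) := by
          rw [← pow_succ']
          congr 1
          omega
        linarith
      rw [hprod] at hstrict
      exact lt_irrefl _ hstrict
    have hmain : ∀ v, x v = M := by
      intro v
      have hpath := h u v
      induction hpath with
      | refl => rfl
      | tail _ hstep ih =>
        obtain ⟨e, heE, hbe, hce⟩ := hstep
        exact hclose _ ih e heE hbe _ hce
    exact ⟨M, hMpos, funext hmain⟩
  refine ⟨part1, part2, ?_, ?_⟩
  · refine ⟨fun _ => (fun _ => (1 : ℝ)), fun _ => ⟨hone_ne, fun _ => zero_le_one, hone_zero⟩, ?_⟩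
    exact LinearIndependent.of_subsingleton 0 hone_ne
  · intro m w hw hli
    by_contra hm
    push_neg at hm
    have hm2 : 2 ≤ m := hm
    set i0 : Fin m := ⟨0, by omega⟩
    set i1 : Fin m := ⟨1, by omega⟩
    have hi01 : i0 ≠ i1 := by
      simp only [i0, i1, ne_eq, Fin.mk.injEq]
      omega
    obtain ⟨h0ne, h0nn, h0z⟩ := hw i0
    obtain ⟨h1ne, h1nn, h1z⟩ := hw i1
    obtain ⟨c0, hc0, hw0⟩ := part2 (w i0) h0ne h0nn h0z
    obtain ⟨c1, hc1, hw1⟩ := part2 (w i1) h1ne h1nn h1z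
    have hcomb := Fintype.linearIndependent_iff.mp hli
      (fun i => if i = i0 then c1 else if i = i1 then -c0 else 0)
    have hzero : ∑ i, (if i = i0 then c1 else if i = i1 then -c0 else 0) • w i = 0 := by
      have hrestrict : ∑ i, (if i = i0 then c1 else if i = i1 then -c0 else 0) • w i =
          ∑ i ∈ ({i0, i1} : Finset (Fin m)),
            (if i = i0 then c1 else if i = i1 then -c0 else 0) • w i := by
        refine (Finset.sum_subset (Finset.subset_univ _) ?_).symm
        intro i _ hi
        simp only [Finset.mem_insert, Finset.mem_singleton] at hi
        push_neg at hi
        rw [if_neg hi.1, if_neg hi.2, zero_smul]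
      rw [hrestrict, Finset.sum_pair hi01, if_pos rfl, if_neg (Ne.symm hi01), if_pos rfl,
        hw0, hw1]
      funext j
      simp only [Pi.add_apply, Pi.smul_apply, smul_eq_mul, Pi.zero_apply]
      ring
    have := hcomb hzero i0
    rw [if_pos rfl] at this
    linarith
end

section
/- A k-uniform hypergraph G is connected if and only if its geometry connectivity β(G) equals 1, i.e., the nonnegative eigenvectors of the Laplacian tensor corresponding to eigenvalue 0 span a one-dimensional space. -/
open Finset

/-! Each edge `e ∋ i` is enumerated by exactly `(k - 1)!` index tuples starting at `i`, so
`(L x^{k-1})_i = ∑_{e ∋ i} (x_i^{k-1} - ∏_{v ∈ e \ {i}} x_v)`. Hence every vector that is constant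
on edges, such as the indicator of a union of components, lies in the kernel. Conversely, at a
vertex where a nonnegative kernel vector is maximal all these terms are nonnegative, hence zero,
so the maximum propagates along edges: on a connected hypergraph the nonnegative kernel vectors
are the multiples of `1`. If `G` is disconnected, the indicator of a component and `1` are two
independent ones. -/

open scoped Nat

theorem Finset.eq_of_prod_eq_pow_card {ι R : Type*} [DecidableEq ι] [CommSemiring R]
    [LinearOrder R] [IsStrictOrderedRing R] {s : Finset ι} {f : ι → R} {M : R}
    (h0 : ∀ v ∈ s, 0 ≤ f v) (hM : ∀ v ∈ s, f v ≤ M) (hprod : ∏ v ∈ s, f v = M ^ #s)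
    {a : ι} (ha : a ∈ s) : f a = M := by
  refine le_antisymm (hM a ha) ?_
  rcases ((h0 a ha).trans (hM a ha)).eq_or_lt with hM0 | hMpos
  · exact hM0 ▸ h0 a ha
  have hrest : ∏ v ∈ s.erase a, f v ≤ M ^ #(s.erase a) := by
    rw [← prod_const]
    exact prod_le_prod (fun v hv => h0 v (mem_of_mem_erase hv))
      fun v hv => hM v (mem_of_mem_erase hv)
  refine le_of_mul_le_mul_right ?_ (pow_pos hMpos #(s.erase a))
  calc M * M ^ #(s.erase a) = ∏ v ∈ s, f v := by rw [hprod, ← pow_succ', card_erase_add_one ha]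
    _ = f a * ∏ v ∈ s.erase a, f v := (mul_prod_erase s f ha).symm
    _ ≤ f a * M ^ #(s.erase a) := mul_le_mul_of_nonneg_left hrest (h0 a ha)

theorem maxLinIndep_one_of_subset_span_singleton {V : Type*} [AddCommGroup V] [Module ℝ V]
    {S : Set V} {o : V} (ho : o ∈ S) (ho0 : o ≠ 0) (hS : S ⊆ ℝ ∙ o) : maxLinIndep S 1 := by
  refine ⟨⟨fun _ => o, fun _ => ho, linearIndependent_unique_iff.2 ho0⟩, fun m w hw hw' => ?_⟩
  have hli : LinearIndependent ℝ (fun i => (⟨w i, hS (hw i)⟩ : ℝ ∙ o)) :=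
    LinearIndependent.of_comp (ℝ ∙ o).subtype hw'
  simpa [finrank_span_singleton ho0] using hli.fintype_card_le_finrank

theorem indicator_nonneg {n : ℕ} (S : Finset (Fin n)) (i : Fin n) : 0 ≤ indicator S i := by
  unfold indicator
  split_ifs <;> norm_num

theorem indicator_ne_zero {n : ℕ} {S : Finset (Fin n)} {i : Fin n} (hi : i ∈ S) :
    indicator S ≠ 0 :=
  fun h => by simpa [indicator, hi] using congrFun h i

theorem linearIndependent_indicator_one {n : ℕ} {S : Finset (Fin n)} {u v : Fin n}
    (hu : u ∈ S) (hv : v ∉ S) : LinearIndependent ℝ ![indicator S, 1] := by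
  rw [LinearIndependent.pair_iff]
  intro s t hst
  have hst_v := congrFun hst v
  have hst_u := congrFun hst u
  simp only [indicator, hu, hv, Pi.add_apply, Pi.smul_apply, Pi.one_apply, Pi.zero_apply,
    if_true, if_false, smul_eq_mul, mul_one, mul_zero, zero_add] at hst_v hst_u
  exact ⟨by linarith, hst_v⟩

theorem Fintype.card_subtype_equiv_apply_eq {α β : Type*} [Fintype α] [Fintype β]
    [DecidableEq α] [DecidableEq β] (a : α) (b : β) (h : Fintype.card α = Fintype.card β) :
    Fintype.card {σ : α ≃ β // σ a = b} = (Fintype.card α - 1)! := by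
  -- `Equiv.optionSubtype`: such `σ` are the bijections `{x // x ≠ a} ≃ {y // y ≠ b}`.
  have e : {σ : α ≃ β // σ a = b} ≃ ({x // x ≠ a} ≃ {y // y ≠ b}) :=
    (Equiv.subtypeEquiv ((Equiv.optionSubtypeNe a).equivCongr (Equiv.refl β)).symm
      (by simp)).trans (Equiv.optionSubtype b)
  rw [Fintype.card_congr e, Fintype.card_equiv (Fintype.equivOfCardEq (by simp [h]))]
  simp

theorem injective_of_card_image_univ_eq {α : Type*} [DecidableEq α] {k : ℕ} {g : Fin k → α}
    (h : #(image g univ) = k) : Function.Injective g := by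
  rw [← Set.injOn_univ, ← coe_univ]
  exact injOn_of_card_image_eq (by simpa using h)

theorem card_filter_apply_zero_image_eq {α : Type*} [Fintype α] [DecidableEq α] {k : ℕ}
    [NeZero k] {e : Finset α} {i : α} (hi : i ∈ e) (he : #e = k) :
    #{g : Fin k → α | g 0 = i ∧ image g univ = e} = (k - 1)! := by
  -- These `g` are the bijections `Fin k ≃ e` sending `0` to `i`.
  have hcard : Fintype.card (Fin k) = Fintype.card e := by simp [he]
  have hσ := Fintype.card_subtype_equiv_apply_eq 0 ⟨i, hi⟩ hcard
  rw [Fintype.card_fin, Fintype.card_subtype] at hσ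
  rw [← hσ]
  symm
  refine card_bij (fun σ _ j => (σ j : α)) ?_ ?_ ?_
  · intro σ hσ
    simp only [mem_filter, mem_univ, true_and] at hσ ⊢
    refine ⟨by rw [hσ], ?_⟩
    ext v
    simp only [mem_image, mem_univ, true_and]
    exact ⟨fun ⟨j, hj⟩ => hj ▸ (σ j).2, fun hv => ⟨σ.symm ⟨v, hv⟩, by simp⟩⟩
  · intro σ _ τ _ hστ
    exact Equiv.ext fun j => Subtype.ext (congrFun hστ j)
  · intro g hg
    simp only [mem_filter, mem_univ, true_and] at hg
    obtain ⟨hg0, hge⟩ := hg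
    have hmem : ∀ j, g j ∈ e := fun j => hge ▸ mem_image_of_mem g (mem_univ j)
    have hinj : Function.Injective g := injective_of_card_image_univ_eq (by rw [hge, he])
    refine ⟨Equiv.ofBijective (fun j => ⟨g j, hmem j⟩) ?_, ?_, rfl⟩
    · rw [Fintype.bijective_iff_injective_and_card]
      exact ⟨fun a b hab => hinj (congrArg Subtype.val hab), hcard⟩
    · simp [hg0]

theorem tapply_sub {ι : Type*} [Fintype ι] [DecidableEq ι] {k : ℕ} [NeZero k]
    (T T' : (Fin k → ι) → ℝ) (x : ι → ℝ) :
    tapply (T - T') x = tapply T x - tapply T' x := by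
  funext i
  simp only [tapply, Pi.sub_apply, ← sum_sub_distrib]
  refine sum_congr rfl fun g _ => ?_
  split_ifs <;> ring

theorem prod_erase_zero_comp_eq_prod_erase {α M : Type*} [DecidableEq α] [CommMonoid M]
    {k : ℕ} [NeZero k] {g : Fin k → α} {e : Finset α} (hge : image g univ = e) (he : #e = k)
    (f : α → M) : ∏ j ∈ univ.erase 0, f (g j) = ∏ v ∈ e.erase (g 0), f v := by
  have hinj : Function.Injective g := injective_of_card_image_univ_eq (by rw [hge, he])
  rw [← hge, ← image_erase hinj, prod_image hinj.injOn]

namespace UniformHypergraph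

variable {n k : ℕ} [NeZero k] (G : UniformHypergraph n k) (x : Fin n → ℝ)

theorem tapply_degTensor (i : Fin n) : tapply G.degTensor x i = G.degree i * x i ^ (k - 1) := by
  rw [tapply, sum_eq_single (fun _ => i)]
  · simp [degTensor]
  · intro g _ hg
    split_ifs with hg0
    · have : ¬ ∀ j, g j = g 0 := fun h => hg (funext fun j => (h j).trans hg0)
      simp [degTensor, this]
    · rfl
  · simp

theorem tapply_adjTensor (i : Fin n) :
    tapply G.adjTensor x i = ∑ e ∈ G.edges with i ∈ e, ∏ v ∈ e.erase i, x v := by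
  have hfac : ((k - 1)! : ℝ) ≠ 0 := by positivity
  calc tapply G.adjTensor x i
      = ∑ g : Fin k → Fin n with g 0 = i ∧ image g univ ∈ G.edges,
          ((k - 1)! : ℝ)⁻¹ * ∏ j ∈ univ.erase 0, x (g j) := by
        rw [tapply, sum_filter]
        refine sum_congr rfl fun g _ => ?_
        by_cases hg0 : g 0 = i <;> by_cases hge : image g univ ∈ G.edges <;>
          simp [adjTensor, hg0, hge]
    _ = ∑ e ∈ G.edges with i ∈ e, ∑ g : Fin k → Fin n with g 0 = i ∧ image g univ = e,
          ((k - 1)! : ℝ)⁻¹ * ∏ j ∈ univ.erase 0, x (g j) := by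
        refine (sum_fiberwise_of_maps_to (g := fun g => image g univ) (fun g hg => ?_) _).symm
          |>.trans (sum_congr rfl fun e he => ?_)
        · simp only [mem_filter, mem_univ, true_and] at hg ⊢
          exact ⟨hg.2, hg.1 ▸ mem_image_of_mem g (mem_univ 0)⟩
        · rw [filter_filter]
          refine sum_congr (filter_congr fun g _ => ?_) fun _ _ => rfl
          rw [mem_filter] at he
          exact ⟨fun h => ⟨h.1.1, h.2⟩, fun h => ⟨⟨h.1, h.2 ▸ he.1⟩, h.2⟩⟩
    _ = ∑ e ∈ G.edges with i ∈ e, ∑ g : Fin k → Fin n with g 0 = i ∧ image g univ = e,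
          ((k - 1)! : ℝ)⁻¹ * ∏ v ∈ e.erase i, x v := by
        refine sum_congr rfl fun e he => sum_congr rfl fun g hg => ?_
        simp only [mem_filter, mem_univ, true_and] at he hg
        rw [prod_erase_zero_comp_eq_prod_erase hg.2 (G.card_eq e he.1), hg.1]
    _ = _ := by
        refine sum_congr rfl fun e he => ?_
        rw [mem_filter] at he
        rw [sum_const, card_filter_apply_zero_image_eq he.2 (G.card_eq e he.1), nsmul_eq_mul,
          ← mul_assoc, mul_inv_cancel₀ hfac, one_mul]

theorem tapply_lapTensor (i : Fin n) :
    tapply G.lapTensor x i =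
      ∑ e ∈ G.edges with i ∈ e, (x i ^ (k - 1) - ∏ v ∈ e.erase i, x v) := by
  rw [show G.lapTensor = G.degTensor - G.adjTensor from rfl, tapply_sub, Pi.sub_apply,
    tapply_degTensor, tapply_adjTensor, sum_sub_distrib, sum_const, nsmul_eq_mul, degree]

theorem tapply_lapTensor_eq_zero_of_forall_edge
    (hx : ∀ e ∈ G.edges, ∀ u ∈ e, ∀ v ∈ e, x u = x v) : tapply G.lapTensor x = 0 := by
  funext i
  rw [tapply_lapTensor, Pi.zero_apply]
  refine sum_eq_zero fun e he => ?_
  rw [mem_filter] at he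
  rw [prod_congr rfl fun v hv => hx e he.1 v (mem_of_mem_erase hv) i he.2, prod_const,
    card_erase_of_mem he.2, G.card_eq e he.1, sub_self]

theorem tapply_lapTensor_indicator {C : Finset (Fin n)}
    (hC : ∀ a b, G.adjRel a b → a ∈ C → b ∈ C) :
    tapply G.lapTensor (indicator C) = 0 := by
  refine G.tapply_lapTensor_eq_zero_of_forall_edge _ fun e he a ha b hb => ?_
  have hab : a ∈ C ↔ b ∈ C := ⟨hC a b ⟨e, he, ha, hb⟩, hC b a ⟨e, he, hb, ha⟩⟩
  simp only [indicator, hab]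

variable {G x}

theorem apply_eq_of_adjRel_of_forall_le (hL : tapply G.lapTensor x = 0) (hx : ∀ v, 0 ≤ x v)
    {u c : Fin n} (hu : ∀ v, x v ≤ x u) (huc : G.adjRel u c) : x c = x u := by
  -- At a maximum every term of `tapply_lapTensor` is nonnegative; they sum to zero.
  obtain ⟨e, he, hue, hce⟩ := huc
  have hcard : ∀ e' ∈ {e ∈ G.edges | u ∈ e}, #(e'.erase u) = k - 1 := fun e' he' => by
    rw [mem_filter] at he'
    rw [card_erase_of_mem he'.2, G.card_eq e' he'.1]
  have hterms :
      ∀ e' ∈ {e ∈ G.edges | u ∈ e}, 0 ≤ x u ^ (k - 1) - ∏ v ∈ e'.erase u, x v := by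
    intro e' he'
    rw [sub_nonneg, ← hcard e' he', ← prod_const]
    exact prod_le_prod (fun v _ => hx v) fun v _ => hu v
  have hmem : e ∈ {e ∈ G.edges | u ∈ e} := mem_filter.2 ⟨he, hue⟩
  have hprod : ∏ v ∈ e.erase u, x v = x u ^ #(e.erase u) := by
    have := (sum_eq_zero_iff_of_nonneg hterms).1 (by rw [← tapply_lapTensor, hL]; rfl) e hmem
    rw [hcard e hmem]
    linarith
  by_cases hcu : c = u
  · rw [hcu]
  · exact eq_of_prod_eq_pow_card (fun v _ => hx v) (fun v _ => hu v) hprod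
      (mem_erase.2 ⟨hcu, hce⟩)

theorem apply_eq_apply_of_connected (hG : G.Connected) (hL : tapply G.lapTensor x = 0)
    (hx : ∀ v, 0 ≤ x v) (a b : Fin n) : x a = x b := by
  have : Nonempty (Fin n) := ⟨a⟩
  obtain ⟨u, hu⟩ := Finite.exists_max x
  have hreach : ∀ v, Relation.ReflTransGen G.adjRel u v → x v = x u := by
    intro v huv
    induction huv with
    | refl => rfl
    | tail _ hvw ih => exact (apply_eq_of_adjRel_of_forall_le hL hx (ih ▸ hu) hvw).trans ih
  rw [hreach a (hG u a), hreach b (hG u b)]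

end UniformHypergraph

theorem connected_iff_geometry_connectivity_one_general {n k : ℕ} [NeZero k]
    (hn : 0 < n) (G : UniformHypergraph n k) :
    G.Connected ↔ maxLinIndep {x : Fin n → ℝ | x ≠ 0 ∧ (∀ i, 0 ≤ x i) ∧ tapply G.lapTensor x = 0} 1 := by
  classical
  set S : Set (Fin n → ℝ) := {x | x ≠ 0 ∧ (∀ i, 0 ≤ x i) ∧ tapply G.lapTensor x = 0}
  have : NeZero n := ⟨hn.ne'⟩
  have one_mem : (1 : Fin n → ℝ) ∈ S :=
    ⟨one_ne_zero, fun _ => zero_le_one,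
      G.tapply_lapTensor_eq_zero_of_forall_edge 1 fun _ _ _ _ _ _ => rfl⟩
  constructor
  · intro hG
    refine maxLinIndep_one_of_subset_span_singleton one_mem one_ne_zero fun x hx => ?_
    refine Submodule.mem_span_singleton.2 ⟨x 0, funext fun b => ?_⟩
    simp [UniformHypergraph.apply_eq_apply_of_connected hG hx.2.2 hx.2.1 b 0]
  · intro hmax u v
    by_contra huv
    set C : Finset (Fin n) := {w | Relation.ReflTransGen G.adjRel u w}
    have huC : u ∈ C := by simp [C, Relation.ReflTransGen.refl]
    have hC : indicator C ∈ S :=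
      ⟨indicator_ne_zero huC, indicator_nonneg C,
        G.tapply_lapTensor_indicator fun a b hab ha => by
          simp only [C, mem_filter, mem_univ, true_and] at ha ⊢
          exact ha.tail hab⟩
    have := hmax.2 2 _ (fun i => by fin_cases i; exacts [hC, one_mem])
      (linearIndependent_indicator_one huC (by simpa [C] using huv))
    omega

/-- `G` is connected iff its geometry connectivity is 1. -/
theorem connected_iff_geometry_connectivity_one {n k : ℕ} [NeZero k] (hk : 2 ≤ k)
    (hn : 0 < n) (G : UniformHypergraph n k) :
    G.Connected ↔ maxLinIndep {x : Fin n → ℝ | x ≠ 0 ∧ (∀ i, 0 ≤ x i) ∧ tapply G.lapTensor x = 0} 1 :=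
  connected_iff_geometry_connectivity_one_general hn G
end

section
/- Let G be a d-regular k-uniform hypergraph. Then the number of connected components of G equals β_ρ(G), the maximum number of linearly independent nonnegative eigenvectors of the adjacency tensor A_G corresponding to its spectral radius ρ(A_G) = d. -/
open Finset

section AuxiliaryLemmas

open Finset

variable {n k : ℕ} [NeZero k]

lemma fin_one_ne_zero (hk : 2 ≤ k) : (1 : Fin k) ≠ 0 := by
  intro h
  have h1 : ((1 : Fin k) : ℕ) = 1 % k := rfl
  rw [h] at h1
  rw [Nat.mod_eq_of_lt (by omega : 1 < k)] at h1
  simp at h1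

lemma card_erase_zero : (Finset.univ.erase (0 : Fin k)).card = k - 1 := by
  rw [Finset.card_erase_of_mem (Finset.mem_univ _), Finset.card_univ, Fintype.card_fin]

/-- The finset of index tuples contributing to row `i` of the adjacency tensor. -/
noncomputable def Bset (G : UniformHypergraph n k) (i : Fin n) : Finset (Fin k → Fin n) :=
  Finset.univ.filter (fun g => g 0 = i ∧ Finset.image g Finset.univ ∈ G.edges)

lemma mem_Bset {G : UniformHypergraph n k} {i : Fin n} {g : Fin k → Fin n} :
    g ∈ Bset G i ↔ g 0 = i ∧ Finset.image g Finset.univ ∈ G.edges := by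
  simp [Bset]

lemma card_enum {e : Finset (Fin n)} (he : e.card = k) {i : Fin n} (hi : i ∈ e) :
    (Finset.univ.filter
      (fun g : Fin k → Fin n => g 0 = i ∧ Finset.image g Finset.univ = e)).card
      = Nat.factorial (k - 1) := by
  classical
  have hinj : ∀ g : Fin k → Fin n, Finset.image g Finset.univ = e → Function.Injective g := by
    intro g hg
    have hcc : (Finset.image g Finset.univ).card = (Finset.univ : Finset (Fin k)).card := by
      rw [hg, he, Finset.card_univ, Fintype.card_fin]
    have h2 := Finset.injOn_of_card_image_eq hcc
    rw [Finset.coe_univ] at h2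
    exact Set.injOn_univ.mp h2
  have hmem : ∀ g : Fin k → Fin n, Finset.image g Finset.univ = e → ∀ j, g j ∈ e := by
    intro g hg j; rw [← hg]; exact Finset.mem_image_of_mem g (Finset.mem_univ j)
  let E : {g : Fin k → Fin n // g 0 = i ∧ Finset.image g Finset.univ = e} ≃
      ({j : Fin k // j ≠ 0} ↪ {v : Fin n // v ∈ e.erase i}) :=
    { toFun := fun g => ⟨fun j => ⟨g.1 j.1, by
        rw [Finset.mem_erase]
        refine ⟨fun h => j.2 (hinj g.1 g.2.2 (by rw [h, g.2.1])), hmem g.1 g.2.2 j.1⟩⟩, by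
        intro a b hab
        simp only [Subtype.mk.injEq] at hab
        exact Subtype.ext (hinj g.1 g.2.2 hab)⟩
      invFun := fun f => ⟨fun j => if h : j = 0 then i else (f ⟨j, h⟩).1, by
        have ginj : Function.Injective
            (fun j : Fin k => if h : j = 0 then i else (f ⟨j, h⟩).1) := by
          intro a b hab
          dsimp only at hab
          by_cases ha : a = 0 <;> by_cases hb : b = 0
          · rw [ha, hb]
          · rw [dif_pos ha, dif_neg hb] at hab
            exact absurd hab.symm (Finset.ne_of_mem_erase (f ⟨b, hb⟩).2)
          · rw [dif_neg ha, dif_pos hb] at hab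
            exact absurd hab (Finset.ne_of_mem_erase (f ⟨a, ha⟩).2)
          · rw [dif_neg ha, dif_neg hb] at hab
            have := f.injective (Subtype.ext hab)
            simpa using this
        refine ⟨by simp, ?_⟩
        have hsub : Finset.image (fun j : Fin k => if h : j = 0 then i else (f ⟨j, h⟩).1)
            Finset.univ ⊆ e := by
          intro x hx
          rw [Finset.mem_image] at hx
          obtain ⟨j, -, rfl⟩ := hx
          by_cases h : j = 0
          · rw [dif_pos h]; exact hi
          · rw [dif_neg h]; exact Finset.mem_of_mem_erase (f ⟨j, h⟩).2
        apply Finset.eq_of_subset_of_card_le hsub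
        rw [Finset.card_image_of_injective _ ginj, Finset.card_univ, Fintype.card_fin, he]⟩
      left_inv := by
        intro g
        apply Subtype.ext
        funext j
        by_cases h : j = 0
        · simp only [dif_pos h]; rw [h, g.2.1]
        · simp only [dif_neg h]
          rfl
      right_inv := by
        intro f
        ext j
        simp only [Function.Embedding.coeFn_mk, dif_neg j.2]
        exact congrArg (fun x : Fin n => (x : ℕ)) (dif_neg j.2) }
  have hcard1 : Fintype.card {j : Fin k // j ≠ 0} = k - 1 := by
    rw [Fintype.card_subtype]
    have : Finset.univ.filter (fun j : Fin k => j ≠ 0) = Finset.univ.erase 0 := by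
      ext j; simp [Finset.mem_erase, and_comm]
    rw [this, card_erase_zero]
  have hcard2 : Fintype.card {v : Fin n // v ∈ e.erase i} = k - 1 := by
    rw [Fintype.card_coe, Finset.card_erase_of_mem hi, he]
  calc (Finset.univ.filter
      (fun g : Fin k → Fin n => g 0 = i ∧ Finset.image g Finset.univ = e)).card
      = Fintype.card {g : Fin k → Fin n // g 0 = i ∧ Finset.image g Finset.univ = e} :=
        (Fintype.card_subtype _).symm
    _ = Fintype.card ({j : Fin k // j ≠ 0} ↪ {v : Fin n // v ∈ e.erase i}) :=
        Fintype.card_congr E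
    _ = (k - 1).descFactorial (k - 1) := by
        rw [Fintype.card_embedding_eq, hcard1, hcard2]
    _ = Nat.factorial (k - 1) := Nat.descFactorial_self _

lemma card_Bset (G : UniformHypergraph n k) (i : Fin n) :
    (Bset G i).card = G.degree i * Nat.factorial (k - 1) := by
  classical
  have hmap : ∀ g ∈ Bset G i, Finset.image g Finset.univ ∈
      G.edges.filter (fun e => i ∈ e) := by
    intro g hg
    rw [mem_Bset] at hg
    rw [Finset.mem_filter]
    exact ⟨hg.2, hg.1 ▸ Finset.mem_image_of_mem g (Finset.mem_univ 0)⟩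
  have h1 : ∀ e ∈ G.edges.filter (fun e => i ∈ e),
      ((Bset G i).filter (fun g => Finset.image g Finset.univ = e)).card
        = Nat.factorial (k - 1) := by
    intro e hee
    rw [Finset.mem_filter] at hee
    have heq : (Bset G i).filter (fun g => Finset.image g Finset.univ = e)
        = Finset.univ.filter
          (fun g : Fin k → Fin n => g 0 = i ∧ Finset.image g Finset.univ = e) := by
      ext g
      simp only [Bset, Finset.mem_filter, Finset.mem_univ, true_and]
      constructor
      · rintro ⟨⟨hg0, -⟩, hge⟩; exact ⟨hg0, hge⟩
      · rintro ⟨hg0, hge⟩; exact ⟨⟨hg0, hge ▸ hee.1⟩, hge⟩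
    rw [heq, card_enum (G.card_eq e hee.1) hee.2]
  calc (Bset G i).card
      = ∑ e ∈ G.edges.filter (fun e => i ∈ e),
          ((Bset G i).filter (fun g => Finset.image g Finset.univ = e)).card :=
        Finset.card_eq_sum_card_fiberwise hmap
    _ = ∑ _e ∈ G.edges.filter (fun e => i ∈ e), Nat.factorial (k - 1) :=
        Finset.sum_congr rfl h1
    _ = G.degree i * Nat.factorial (k - 1) := by
        rw [Finset.sum_const, smul_eq_mul, UniformHypergraph.degree]

lemma rowsum (G : UniformHypergraph n k) (i : Fin n) :
    ∑ _g ∈ Bset G i, (1 / (Nat.factorial (k - 1) : ℝ)) = (G.degree i : ℝ) := by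
  have h : (Nat.factorial (k - 1) : ℝ) ≠ 0 := Nat.cast_ne_zero.mpr (Nat.factorial_ne_zero _)
  rw [Finset.sum_const, card_Bset, nsmul_eq_mul]
  push_cast
  field_simp

lemma crowsum (G : UniformHypergraph n k) (i : Fin n) :
    ∑ _g ∈ Bset G i, ((1 / (Nat.factorial (k - 1) : ℝ) : ℝ) : ℂ) = (G.degree i : ℂ) := by
  have h : (Nat.factorial (k - 1) : ℂ) ≠ 0 := Nat.cast_ne_zero.mpr (Nat.factorial_ne_zero _)
  rw [Finset.sum_const, card_Bset, nsmul_eq_mul]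
  push_cast
  field_simp

lemma tapply_adj (G : UniformHypergraph n k) (x : Fin n → ℝ) (i : Fin n) :
    tapply G.adjTensor x i = ∑ g ∈ Bset G i,
      (1 / (Nat.factorial (k - 1) : ℝ)) * ∏ j ∈ Finset.univ.erase (0 : Fin k), x (g j) := by
  classical
  rw [Bset, Finset.sum_filter]
  simp only [tapply]
  apply Finset.sum_congr rfl
  intro g _
  simp only [UniformHypergraph.adjTensor]
  by_cases h1 : g 0 = i <;> by_cases h2 : Finset.image g Finset.univ ∈ G.edges <;>
    simp [h1, h2]

lemma capply_adj (G : UniformHypergraph n k) (x : Fin n → ℂ) (i : Fin n) :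
    capply G.adjTensor x i = ∑ g ∈ Bset G i,
      ((1 / (Nat.factorial (k - 1) : ℝ) : ℝ) : ℂ)
        * ∏ j ∈ Finset.univ.erase (0 : Fin k), x (g j) := by
  classical
  rw [Bset, Finset.sum_filter]
  simp only [capply]
  apply Finset.sum_congr rfl
  intro g _
  simp only [UniformHypergraph.adjTensor]
  by_cases h1 : g 0 = i <;> by_cases h2 : Finset.image g Finset.univ ∈ G.edges <;>
    simp [h1, h2]

lemma comp_closed {G : UniformHypergraph n k} {r : ℕ} {V : Fin r → Finset (Fin n)}
    (hV : G.IsComponents V) {j : Fin r} {u : Fin n} (hu : u ∈ V j) {e : Finset (Fin n)}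
    (he : e ∈ G.edges) (hue : u ∈ e) {v : Fin n} (hv : v ∈ e) : v ∈ V j :=
  (hV.2.2 j u hu v).mpr (Relation.ReflTransGen.single ⟨e, he, hue, hv⟩)

lemma exists_g (hk : 2 ≤ k) {e : Finset (Fin n)} (he : e.card = k) {b v : Fin n}
    (hb : b ∈ e) (hv : v ∈ e) (hbv : b ≠ v) :
    ∃ g : Fin k → Fin n, g 0 = b ∧ g 1 = v ∧ Finset.image g Finset.univ = e := by
  classical
  have hcard : Fintype.card {x // x ∈ e} = k := by rw [Fintype.card_coe, he]
  let σ : Fin k ≃ {x // x ∈ e} := (Fintype.equivFinOfCardEq hcard).symm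
  let b' : {x // x ∈ e} := ⟨b, hb⟩
  let v' : {x // x ∈ e} := ⟨v, hv⟩
  let σ₁ : Fin k ≃ {x // x ∈ e} := (Equiv.swap 0 (σ.symm b')).trans σ
  have hσ₁0 : σ₁ 0 = b' := by simp [σ₁]
  let l := σ₁.symm v'
  have hσ₁l : σ₁ l = v' := Equiv.apply_symm_apply _ _
  have hl0 : l ≠ 0 := by
    intro h
    rw [h, hσ₁0] at hσ₁l
    exact hbv (congrArg Subtype.val hσ₁l)
  let σ₂ : Fin k ≃ {x // x ∈ e} := (Equiv.swap 1 l).trans σ₁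
  have h0 : σ₂ 0 = b' := by
    have hsw : Equiv.swap (1 : Fin k) l 0 = 0 :=
      Equiv.swap_apply_of_ne_of_ne (fin_one_ne_zero hk).symm (Ne.symm hl0)
    show σ₁ (Equiv.swap (1 : Fin k) l 0) = b'
    rw [hsw, hσ₁0]
  have h1 : σ₂ 1 = v' := by
    show σ₁ (Equiv.swap (1 : Fin k) l 1) = v'
    rw [Equiv.swap_apply_left, hσ₁l]
  refine ⟨fun j => (σ₂ j : Fin n), congrArg Subtype.val h0, congrArg Subtype.val h1, ?_⟩
  apply Finset.Subset.antisymm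
  · intro x hx
    rw [Finset.mem_image] at hx
    obtain ⟨j, -, rfl⟩ := hx
    exact (σ₂ j).2
  · intro x hx
    rw [Finset.mem_image]
    exact ⟨σ₂.symm ⟨x, hx⟩, Finset.mem_univ _, by simp⟩

lemma step_lemma {d : ℕ} (hk : 2 ≤ k) (G : UniformHypergraph n k)
    (hreg : ∀ i, G.degree i = d) (x : Fin n → ℝ) (hx0 : ∀ i, 0 ≤ x i)
    (heig : tapply G.adjTensor x = fun i => (d : ℝ) * x i ^ (k - 1))
    (V₀ : Finset (Fin n))
    (hclosed : ∀ u ∈ V₀, ∀ e ∈ G.edges, u ∈ e → ∀ v ∈ e, v ∈ V₀)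
    (c : ℝ) (hmax : ∀ v ∈ V₀, x v ≤ c) (b : Fin n) (hb : b ∈ V₀) (hxb : x b = c)
    {e : Finset (Fin n)} (he : e ∈ G.edges) (hbe : b ∈ e) {v : Fin n} (hv : v ∈ e) :
    x v = c := by
  classical
  have hvV : v ∈ V₀ := hclosed b hb e he hbe v hv
  have hc0 : 0 ≤ c := hxb ▸ hx0 b
  rcases eq_or_lt_of_le hc0 with hc | hc
  · have h1 := hx0 v
    have h2 := hmax v hvV
    linarith
  · by_cases hbveq : v = b
    · rw [hbveq, hxb]
    obtain ⟨g, hg0, hg1, hge⟩ := exists_g hk (G.card_eq e he) hbe hv (Ne.symm hbveq)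
    have hgB : g ∈ Bset G b := mem_Bset.mpr ⟨hg0, hge ▸ he⟩
    have hvalV : ∀ g' ∈ Bset G b, ∀ j : Fin k, g' j ∈ V₀ := by
      intro g' hg' j
      obtain ⟨h0, hE⟩ := mem_Bset.mp hg'
      exact hclosed b hb _ hE (h0 ▸ Finset.mem_image_of_mem g' (Finset.mem_univ 0)) _
        (Finset.mem_image_of_mem g' (Finset.mem_univ j))
    have hle : ∀ g' ∈ Bset G b,
        (1 / (Nat.factorial (k - 1) : ℝ)) * ∏ j ∈ Finset.univ.erase (0 : Fin k), x (g' j)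
        ≤ (1 / (Nat.factorial (k - 1) : ℝ)) * c ^ (k - 1) := by
      intro g' hg'
      have hw : (0 : ℝ) ≤ 1 / (Nat.factorial (k - 1) : ℝ) := by positivity
      refine mul_le_mul_of_nonneg_left ?_ hw
      calc ∏ j ∈ Finset.univ.erase (0 : Fin k), x (g' j)
          ≤ ∏ _j ∈ Finset.univ.erase (0 : Fin k), c :=
            Finset.prod_le_prod (fun j _ => hx0 _) (fun j _ => hmax _ (hvalV g' hg' j))
        _ = c ^ (k - 1) := by rw [Finset.prod_const, card_erase_zero]
    have hEq : ∑ g' ∈ Bset G b,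
        (1 / (Nat.factorial (k - 1) : ℝ)) * ∏ j ∈ Finset.univ.erase (0 : Fin k), x (g' j)
        = ∑ _g' ∈ Bset G b, (1 / (Nat.factorial (k - 1) : ℝ)) * c ^ (k - 1) := by
      have h1 := (tapply_adj G x b).symm.trans (congrFun heig b)
      rw [h1, hxb, ← Finset.sum_mul, rowsum, hreg]
    have hterm := (Finset.sum_eq_sum_iff_of_le hle).mp hEq g hgB
    have hfactpos : (0 : ℝ) < 1 / (Nat.factorial (k - 1) : ℝ) := by positivity
    have hprod : ∏ j ∈ Finset.univ.erase (0 : Fin k), x (g j) = c ^ (k - 1) :=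
      mul_left_cancel₀ (ne_of_gt hfactpos) hterm
    have h1mem : (1 : Fin k) ∈ Finset.univ.erase (0 : Fin k) :=
      Finset.mem_erase.mpr ⟨fin_one_ne_zero hk, Finset.mem_univ _⟩
    have hsplit := Finset.mul_prod_erase _ (fun j => x (g j)) h1mem
    have hrest : ∏ j ∈ (Finset.univ.erase (0 : Fin k)).erase 1, x (g j) ≤ c ^ (k - 2) := by
      calc ∏ j ∈ (Finset.univ.erase (0 : Fin k)).erase 1, x (g j)
          ≤ ∏ _j ∈ (Finset.univ.erase (0 : Fin k)).erase 1, c :=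
            Finset.prod_le_prod (fun j _ => hx0 _)
              (fun j hj => hmax _ (hvalV g hgB j))
        _ = c ^ (k - 2) := by
            have hkk : k - 1 - 1 = k - 2 := by omega
            rw [Finset.prod_const, Finset.card_erase_of_mem h1mem, card_erase_zero, hkk]
    have hxv : c ^ (k - 1) ≤ x v * c ^ (k - 2) := by
      calc c ^ (k - 1)
          = x v * ∏ j ∈ (Finset.univ.erase (0 : Fin k)).erase 1, x (g j) := by
            rw [← hprod, ← hsplit]
            show x (g 1) * _ = _
            rw [hg1]
        _ ≤ x v * c ^ (k - 2) := mul_le_mul_of_nonneg_left hrest (hx0 v)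
    have hpow : c ^ (k - 1) = c ^ (k - 2) * c := by
      rw [← pow_succ]
      congr 1
      omega
    have hcs : (0 : ℝ) < c ^ (k - 2) := pow_pos hc _
    have hcle : c ≤ x v := by
      rw [hpow] at hxv
      nlinarith
    linarith [hmax v hvV]

lemma const_on_comp {d : ℕ} (hk : 2 ≤ k) (G : UniformHypergraph n k)
    (hreg : ∀ i, G.degree i = d) (x : Fin n → ℝ) (hx0 : ∀ i, 0 ≤ x i)
    (heig : tapply G.adjTensor x = fun i => (d : ℝ) * x i ^ (k - 1))
    {r : ℕ} {V : Fin r → Finset (Fin n)} (hV : G.IsComponents V) (j : Fin r) :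
    ∃ c : ℝ, ∀ v ∈ V j, x v = c := by
  obtain ⟨u, hu, hmaxu⟩ := Finset.exists_max_image (V j) x (hV.2.1 j)
  refine ⟨x u, ?_⟩
  have hclosed : ∀ w ∈ V j, ∀ e ∈ G.edges, w ∈ e → ∀ v ∈ e, v ∈ V j :=
    fun w hw e he hwe v hve => comp_closed hV hw he hwe hve
  have key : ∀ v, Relation.ReflTransGen G.adjRel u v → x v = x u := by
    intro v h
    induction h with
    | refl => rfl
    | tail hab hbc ih =>
      rename_i b v'
      obtain ⟨e, he, hbe, hce⟩ := hbc
      have hbV : b ∈ V j := (hV.2.2 j u hu b).mpr hab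
      exact step_lemma hk G hreg x hx0 heig (V j) hclosed (x u) hmaxu b hbV ih he hbe hce
  intro v hv
  exact key v ((hV.2.2 j u hu v).mp hv)

lemma indicator_eigen {d : ℕ} (hk : 2 ≤ k) (G : UniformHypergraph n k)
    (hreg : ∀ i, G.degree i = d)
    {r : ℕ} {V : Fin r → Finset (Fin n)} (hV : G.IsComponents V) (j : Fin r) :
    tapply G.adjTensor (indicator (V j))
      = fun i => (d : ℝ) * (indicator (V j) i) ^ (k - 1) := by
  classical
  funext i
  rw [tapply_adj]
  by_cases hi : i ∈ V j
  · have hone : ∀ g ∈ Bset G i,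
        ∏ l ∈ Finset.univ.erase (0 : Fin k), indicator (V j) (g l) = 1 := by
      intro g hg
      apply Finset.prod_eq_one
      intro l _
      obtain ⟨h0, hE⟩ := mem_Bset.mp hg
      have hlm : g l ∈ V j := comp_closed hV hi hE
        (h0 ▸ Finset.mem_image_of_mem g (Finset.mem_univ 0))
        (Finset.mem_image_of_mem g (Finset.mem_univ l))
      simp [indicator, hlm]
    calc ∑ g ∈ Bset G i, (1 / (Nat.factorial (k - 1) : ℝ))
          * ∏ l ∈ Finset.univ.erase (0 : Fin k), indicator (V j) (g l)
        = ∑ _g ∈ Bset G i, (1 / (Nat.factorial (k - 1) : ℝ)) :=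
          Finset.sum_congr rfl (fun g hg => by rw [hone g hg, mul_one])
      _ = (G.degree i : ℝ) := rowsum G i
      _ = (d : ℝ) * (indicator (V j) i) ^ (k - 1) := by
          rw [hreg]
          simp [indicator, hi]
  · have hzero : ∀ g ∈ Bset G i,
        ∏ l ∈ Finset.univ.erase (0 : Fin k), indicator (V j) (g l) = 0 := by
      intro g hg
      obtain ⟨h0, hE⟩ := mem_Bset.mp hg
      apply Finset.prod_eq_zero
        (Finset.mem_erase.mpr ⟨fin_one_ne_zero hk, Finset.mem_univ (1 : Fin k)⟩)
      have hg1 : g 1 ∉ V j := by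
        intro hmem
        exact hi (comp_closed hV hmem hE (Finset.mem_image_of_mem g (Finset.mem_univ 1))
          (h0 ▸ Finset.mem_image_of_mem g (Finset.mem_univ 0)))
      simp [indicator, hg1]
    have hindz : indicator (V j) i = 0 := by simp [indicator, hi]
    calc ∑ g ∈ Bset G i, (1 / (Nat.factorial (k - 1) : ℝ))
          * ∏ l ∈ Finset.univ.erase (0 : Fin k), indicator (V j) (g l)
        = ∑ _g ∈ Bset G i, (0 : ℝ) :=
          Finset.sum_congr rfl (fun g hg => by rw [hzero g hg, mul_zero])
      _ = 0 := Finset.sum_const_zero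
      _ = (d : ℝ) * (indicator (V j) i) ^ (k - 1) := by
          rw [hindz, zero_pow (by omega : k - 1 ≠ 0), mul_zero]

end AuxiliaryLemmas

/-- for a `d`-regular hypergraph, the number of connected components
equals `β_ρ(G)`, the maximum number of linearly independent nonnegative eigenvectors
of `A_G` for the spectral radius `ρ(A_G) = d`. -/
theorem regular_components_eq_beta_rho {n k d r : ℕ} [NeZero k] (hk : 2 ≤ k)
    (hn : 0 < n) (G : UniformHypergraph n k) (hreg : ∀ i, G.degree i = d)
    (V : Fin r → Finset (Fin n)) (hV : G.IsComponents V) :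
    specRad G.adjTensor = d ∧
    maxLinIndep {x : Fin n → ℝ | x ≠ 0 ∧ (∀ i, 0 ≤ x i) ∧
      tapply G.adjTensor x = fun i => (d : ℝ) * x i ^ (k - 1)} r := by
  classical
  constructor
  · -- spectral radius equals d
    rw [specRad]
    apply IsGreatest.csSup_eq
    constructor
    · -- d is attained, via the all-ones eigenvector
      refine ⟨(d : ℂ), ⟨fun _ => 1, ?_, ?_⟩, by simp⟩
      · intro h
        have h0 := congrFun h ⟨0, hn⟩
        simp at h0
      · funext i
        have h1 : capply G.adjTensor (fun _ => (1 : ℂ)) i = (d : ℂ) := by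
          rw [capply_adj]
          simp only [Finset.prod_const_one, mul_one]
          rw [crowsum, hreg]
        rw [h1]
        simp
    · -- every eigenvalue has modulus at most d
      rintro s ⟨lam, ⟨x, hxne, hxe⟩, rfl⟩
      obtain ⟨i, -, hi⟩ := Finset.exists_max_image Finset.univ (fun i => ‖x i‖)
        ⟨⟨0, hn⟩, Finset.mem_univ _⟩
      set M := ‖x i‖ with hM
      have hMpos : 0 < M := by
        obtain ⟨a, ha⟩ := Function.ne_iff.mp hxne
        have h1 : 0 < ‖x a‖ := norm_pos_iff.mpr ha
        exact lt_of_lt_of_le h1 (hi a (Finset.mem_univ a))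
      have heqi : ∑ g ∈ Bset G i, ((1 / (Nat.factorial (k - 1) : ℝ) : ℝ) : ℂ)
          * ∏ j ∈ Finset.univ.erase (0 : Fin k), x (g j) = lam * x i ^ (k - 1) := by
        have h := congrFun hxe i
        rw [capply_adj] at h
        exact h
      have hbound : ‖lam‖ * M ^ (k - 1) ≤ (d : ℝ) * M ^ (k - 1) := by
        have h1 : ‖lam‖ * M ^ (k - 1) = ‖lam * x i ^ (k - 1)‖ := by
          rw [norm_mul, norm_pow]
        rw [h1, ← heqi]
        calc ‖∑ g ∈ Bset G i, ((1 / (Nat.factorial (k - 1) : ℝ) : ℝ) : ℂ)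
                * ∏ j ∈ Finset.univ.erase (0 : Fin k), x (g j)‖
            ≤ ∑ g ∈ Bset G i, ‖((1 / (Nat.factorial (k - 1) : ℝ) : ℝ) : ℂ)
                * ∏ j ∈ Finset.univ.erase (0 : Fin k), x (g j)‖ :=
              norm_sum_le _ _
          _ ≤ ∑ _g ∈ Bset G i, (1 / (Nat.factorial (k - 1) : ℝ)) * M ^ (k - 1) := by
              apply Finset.sum_le_sum
              intro g _
              rw [norm_mul]
              have hw : ‖(((1 / (Nat.factorial (k - 1) : ℝ) : ℝ)) : ℂ)‖
                  = 1 / (Nat.factorial (k - 1) : ℝ) := by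
                rw [Complex.norm_of_nonneg (by positivity)]
              rw [hw]
              refine mul_le_mul_of_nonneg_left ?_ (by positivity)
              rw [norm_prod]
              calc ∏ j ∈ Finset.univ.erase (0 : Fin k), ‖x (g j)‖
                  ≤ ∏ _j ∈ Finset.univ.erase (0 : Fin k), M :=
                    Finset.prod_le_prod (fun j _ => norm_nonneg _)
                      (fun j _ => hi (g j) (Finset.mem_univ _))
                _ = M ^ (k - 1) := by rw [Finset.prod_const, card_erase_zero]
          _ = (d : ℝ) * M ^ (k - 1) := by
              rw [← Finset.sum_mul, rowsum, hreg]
      exact le_of_mul_le_mul_right hbound (pow_pos hMpos _)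
  · constructor
    · -- the indicator vectors of the components
      refine ⟨fun j => indicator (V j), fun j => ⟨?_, ?_, indicator_eigen hk G hreg hV j⟩, ?_⟩
      · obtain ⟨u, hu⟩ := hV.2.1 j
        intro h
        have h0 := congrFun h u
        simp [indicator, hu] at h0
      · intro i
        by_cases h : i ∈ V j <;> simp [indicator, h]
      · rw [Fintype.linearIndependent_iff]
        intro gc hgc j
        obtain ⟨u, hu⟩ := hV.2.1 j
        have h1 : ∑ j' : Fin r, gc j' * indicator (V j') u = 0 := by
          have h0 := congrFun hgc u
          simpa [Finset.sum_apply] using h0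
        have hsingle : ∑ j' : Fin r, gc j' * indicator (V j') u
            = gc j * indicator (V j) u := by
          apply Finset.sum_eq_single j
          · intro j' _ hj'
            have hnot : u ∉ V j' := by
              intro hmem
              obtain ⟨j₀, hj₀, huniq⟩ := hV.1 u
              exact hj' ((huniq j' hmem).trans (huniq j hu).symm)
            simp [indicator, hnot]
          · intro h; exact absurd (Finset.mem_univ j) h
        rw [hsingle] at h1
        simpa [indicator, hu] using h1
    · -- any independent family of nonnegative eigenvectors has size at most r
      intro m w hw hind
      have hmem : ∀ i, w i ∈ Submodule.span ℝ
          (Set.range (fun j : Fin r => (indicator (V j) : Fin n → ℝ))) := by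
        intro i
        obtain ⟨hne, hnn, heig⟩ := hw i
        choose c hc using fun j => const_on_comp hk G hreg (w i) hnn heig hV j
        have hwi : w i = ∑ j : Fin r, c j • (indicator (V j) : Fin n → ℝ) := by
          funext a
          obtain ⟨j, hj, huniq⟩ := hV.1 a
          have hsingle : ∑ j' : Fin r, c j' * indicator (V j') a
              = c j * indicator (V j) a := by
            apply Finset.sum_eq_single j
            · intro j' _ hj'
              have hnot : a ∉ V j' := fun hmem => hj' (huniq j' hmem)
              simp [indicator, hnot]
            · intro h; exact absurd (Finset.mem_univ j) h
          have h2 : (∑ j' : Fin r, c j' • (indicator (V j') : Fin n → ℝ)) a = c j := by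
            simp only [Finset.sum_apply, Pi.smul_apply, smul_eq_mul]
            rw [hsingle]
            simp [indicator, hj]
          rw [h2, hc j a hj]
        rw [hwi]
        exact Submodule.sum_mem _ (fun j _ =>
          Submodule.smul_mem _ _ (Submodule.subset_span (Set.mem_range_self j)))
      set W := Submodule.span ℝ
        (Set.range (fun j : Fin r => (indicator (V j) : Fin n → ℝ))) with hW
      let w' : Fin m → W := fun i => ⟨w i, hmem i⟩
      have hind' : LinearIndependent ℝ w' := by
        apply LinearIndependent.of_comp W.subtype
        have hcomp : (W.subtype ∘ w') = w := rfl
        rw [hcomp]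
        exact hind
      have h1 : m ≤ Module.finrank ℝ W := by
        have := hind'.fintype_card_le_finrank
        simpa using this
      have h2 : Module.finrank ℝ W ≤ r := by
        have := finrank_range_le_card (R := ℝ)
          (fun j : Fin r => (indicator (V j) : Fin n → ℝ))
        simpa [Set.finrank] using this
      exact le_trans h1 h2
end

section
/- Let G(V_1),...,G(V_r) be the connected components of a k-uniform hypergraph G, and let x be a nonnegative eigenvector of L_G corresponding to the eigenvalue 0. Then x is a nonnegative linear combination of the indicator vectors e_{V_1},...,e_{V_r}; i.e., x is constant on each connected component. -/
open Finset

section Aux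

variable {n k : ℕ}

lemma fiber_injective [NeZero k] {e : Finset (Fin n)} (he : e.card = k)
    {g : Fin k → Fin n} (hg : Finset.image g Finset.univ = e) : Function.Injective g := by
  have hcard : (Finset.image g Finset.univ).card = (Finset.univ : Finset (Fin k)).card := by
    rw [hg, he, Finset.card_univ, Fintype.card_fin]
  have := Finset.card_image_iff.mp hcard
  rw [Finset.coe_univ] at this
  exact Set.injOn_univ.mp this

lemma fiber_prod [NeZero k] {e : Finset (Fin n)} (he : e.card = k) {i : Fin n}
    {g : Fin k → Fin n} (h0 : g 0 = i) (hg : Finset.image g Finset.univ = e) (x : Fin n → ℝ) :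
    ∏ j ∈ Finset.univ.erase (0 : Fin k), x (g j) = ∏ v ∈ e.erase i, x v := by
  have hinj := fiber_injective he hg
  rw [← Finset.prod_image (fun a _ b _ hab => hinj hab)]
  rw [Finset.image_erase hinj, hg, h0]

lemma fiber_card [NeZero k] (hk : 2 ≤ k) {e : Finset (Fin n)} (he : e.card = k)
    {i : Fin n} (hi : i ∈ e) :
    (Finset.univ.filter
      (fun g : Fin k → Fin n => g 0 = i ∧ Finset.image g Finset.univ = e)).card
      = Nat.factorial (k - 1) := by
  classical
  let φ : ({j : Fin k // j ≠ 0} ↪ {v : Fin n // v ∈ e.erase i}) → (Fin k → Fin n) :=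
    fun F j => if h : j = 0 then i else (F ⟨j, h⟩).1
  have hφinj : Function.Injective φ := by
    intro F1 F2 h
    apply DFunLike.ext
    intro j
    have hc := congrFun h j.1
    simp only [φ, dif_neg j.2] at hc
    exact Subtype.ext hc
  have himg : Finset.univ.filter
      (fun g : Fin k → Fin n => g 0 = i ∧ Finset.image g Finset.univ = e)
      = Finset.image φ Finset.univ := by
    ext g
    simp only [Finset.mem_filter, Finset.mem_univ, true_and, Finset.mem_image]
    constructor
    · rintro ⟨h0, himge⟩
      have hinj := fiber_injective he himge
      have hmem : ∀ j : Fin k, j ≠ 0 → g j ∈ e.erase i := by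
        intro j hj
        refine Finset.mem_erase.mpr ⟨?_, ?_⟩
        · intro hji
          exact hj (hinj (by rw [h0, hji]))
        · rw [← himge]; exact Finset.mem_image_of_mem g (Finset.mem_univ _)
      refine ⟨⟨fun j => ⟨g j.1, hmem j.1 j.2⟩, ?_⟩, ?_⟩
      · intro a b hab
        exact Subtype.ext (hinj (congrArg Subtype.val hab))
      · funext j
        simp only [φ]
        by_cases h : j = 0
        · rw [dif_pos h, h, h0]
        · rw [dif_neg h]; rfl
    · rintro ⟨F, rfl⟩
      have hg0 : φ F 0 = i := by simp [φ]
      refine ⟨hg0, ?_⟩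
      have hginj : Function.Injective (φ F) := by
        intro a b hab
        by_cases ha : a = 0 <;> by_cases hb : b = 0
        · rw [ha, hb]
        · exfalso
          simp only [φ, dif_pos ha, dif_neg hb] at hab
          exact (Finset.mem_erase.mp (F ⟨b, hb⟩).2).1 hab.symm
        · exfalso
          simp only [φ, dif_pos hb, dif_neg ha] at hab
          exact (Finset.mem_erase.mp (F ⟨a, ha⟩).2).1 hab
        · simp only [φ, dif_neg ha, dif_neg hb] at hab
          exact congrArg Subtype.val (F.injective (Subtype.ext hab))
      have hsub : Finset.image (φ F) Finset.univ ⊆ e := by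
        intro v hv
        obtain ⟨j, -, rfl⟩ := Finset.mem_image.mp hv
        by_cases h : j = 0
        · simp only [φ, dif_pos h]; exact hi
        · simp only [φ, dif_neg h]
          exact Finset.mem_of_mem_erase (F ⟨j, h⟩).2
      apply Finset.eq_of_subset_of_card_le hsub
      rw [he, Finset.card_image_of_injective _ hginj, Finset.card_univ, Fintype.card_fin]
  rw [himg, Finset.card_image_of_injective _ hφinj, Finset.card_univ,
    Fintype.card_embedding_eq]
  have h1 : Fintype.card {j : Fin k // j ≠ 0} = k - 1 := by
    rw [Fintype.card_subtype_compl]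
    simp
  have h2 : Fintype.card {v : Fin n // v ∈ e.erase i} = k - 1 := by
    rw [Fintype.card_coe, Finset.card_erase_of_mem hi, he]
  rw [h1, h2, Nat.descFactorial_self]

lemma tapply_adj_s13 [NeZero k] (hk : 2 ≤ k) (G : UniformHypergraph n k) (x : Fin n → ℝ)
    (i : Fin n) :
    tapply G.adjTensor x i
      = ∑ e ∈ G.edges.filter (fun e => i ∈ e), ∏ v ∈ e.erase i, x v := by
  classical
  have h1 : tapply G.adjTensor x i = ∑ g ∈ Finset.univ.filter
      (fun g : Fin k → Fin n => g 0 = i ∧ Finset.image g Finset.univ ∈ G.edges),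
      (1 / (Nat.factorial (k - 1) : ℝ)) * ∏ j ∈ Finset.univ.erase (0 : Fin k), x (g j) := by
    unfold tapply UniformHypergraph.adjTensor
    rw [Finset.sum_filter]
    apply Finset.sum_congr rfl
    intro g _
    by_cases h0 : g 0 = i <;> by_cases hm : Finset.image g Finset.univ ∈ G.edges <;>
      simp [h0, hm]
  rw [h1]
  rw [← Finset.sum_fiberwise_of_maps_to (g := fun g : Fin k → Fin n => Finset.image g Finset.univ)
    (t := G.edges.filter (fun e => i ∈ e)) ?_ _]
  · apply Finset.sum_congr rfl
    intro e hemem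
    simp only [Finset.mem_filter] at hemem
    obtain ⟨hee, hie⟩ := hemem
    have hek : e.card = k := G.card_eq e hee
    have hset : (Finset.univ.filter
        (fun g : Fin k → Fin n => g 0 = i ∧ Finset.image g Finset.univ ∈ G.edges)).filter
        (fun g => Finset.image g Finset.univ = e)
        = Finset.univ.filter
          (fun g : Fin k → Fin n => g 0 = i ∧ Finset.image g Finset.univ = e) := by
      ext g
      simp only [Finset.mem_filter, Finset.mem_univ, true_and]
      constructor
      · rintro ⟨⟨h0, _⟩, h2⟩; exact ⟨h0, h2⟩
      · rintro ⟨h0, h2⟩; exact ⟨⟨h0, h2 ▸ hee⟩, h2⟩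
    rw [hset]
    have hval : ∀ g ∈ Finset.univ.filter
        (fun g : Fin k → Fin n => g 0 = i ∧ Finset.image g Finset.univ = e),
        (1 / (Nat.factorial (k - 1) : ℝ)) * ∏ j ∈ Finset.univ.erase (0 : Fin k), x (g j)
        = (1 / (Nat.factorial (k - 1) : ℝ)) * ∏ v ∈ e.erase i, x v := by
      intro g hg
      simp only [Finset.mem_filter, Finset.mem_univ, true_and] at hg
      rw [fiber_prod hek hg.1 hg.2]
    rw [Finset.sum_congr rfl hval, Finset.sum_const, fiber_card hk hek hie,
      nsmul_eq_mul]
    have : (Nat.factorial (k - 1) : ℝ) ≠ 0 := Nat.cast_ne_zero.mpr (Nat.factorial_ne_zero _)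
    field_simp
  · intro g hg
    simp only [Finset.mem_filter, Finset.mem_univ, true_and] at hg ⊢
    exact ⟨hg.2, hg.1 ▸ Finset.mem_image_of_mem g (Finset.mem_univ _)⟩

lemma tapply_deg [NeZero k] (G : UniformHypergraph n k) (x : Fin n → ℝ) (i : Fin n) :
    tapply G.degTensor x i = (G.degree i : ℝ) * x i ^ (k - 1) := by
  classical
  unfold tapply UniformHypergraph.degTensor
  rw [Finset.sum_eq_single (fun _ => i)]
  · have hcard : (Finset.univ.erase (0 : Fin k)).card = k - 1 := by
      rw [Finset.card_erase_of_mem (Finset.mem_univ _), Finset.card_univ, Fintype.card_fin]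
    simp [Finset.prod_const, hcard]
  · intro g _ hg
    by_cases h0 : g 0 = i
    · have hnall : ¬ (∀ j, g j = g 0) := fun hall => hg (funext fun j => (hall j).trans h0)
      rw [if_pos h0, if_neg hnall, zero_mul]
    · rw [if_neg h0]
  · intro h; exact absurd (Finset.mem_univ _) h

lemma tapply_lap [NeZero k] (G : UniformHypergraph n k) (x : Fin n → ℝ) (i : Fin n) :
    tapply G.lapTensor x i = tapply G.degTensor x i - tapply G.adjTensor x i := by
  unfold tapply UniformHypergraph.lapTensor
  rw [← Finset.sum_sub_distrib]
  apply Finset.sum_congr rfl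
  intro g _
  split_ifs with h <;> ring

lemma lap_key_eq [NeZero k] (hk : 2 ≤ k) (G : UniformHypergraph n k) {x : Fin n → ℝ}
    (hx : IsEigenpair G.lapTensor 0 x) (i : Fin n) :
    (G.degree i : ℝ) * x i ^ (k - 1)
      = ∑ e ∈ G.edges.filter (fun e => i ∈ e), ∏ v ∈ e.erase i, x v := by
  have h := congrFun hx.2 i
  rw [tapply_lap, tapply_deg, tapply_adj_s13 hk] at h
  simp only [zero_mul] at h
  linarith

end Aux

/-- every nonnegative null eigenvector of `L_G` is a nonnegative linear
combination of the indicator vectors of the connected components. -/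
theorem nonneg_null_eigenvector_combination {n k r : ℕ} [NeZero k] (hk : 2 ≤ k)
    (G : UniformHypergraph n k) (V : Fin r → Finset (Fin n)) (hV : G.IsComponents V)
    (x : Fin n → ℝ) (hx0 : ∀ i, 0 ≤ x i) (hx : IsEigenpair G.lapTensor 0 x) :
    ∃ c : Fin r → ℝ, (∀ i, 0 ≤ c i) ∧ x = ∑ i : Fin r, c i • indicator (V i) := by
  classical
  obtain ⟨hpart, hne, hcc⟩ := hV
  have hedge : ∀ j : Fin r, ∀ e ∈ G.edges, ∀ b ∈ e, b ∈ V j → e ⊆ V j := by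
    intro j e he b hb hbV v hv
    exact (hcc j b hbV v).mpr (Relation.ReflTransGen.single ⟨e, he, hb, hv⟩)
  have hmax : ∀ j : Fin r, ∃ M : ℝ, 0 ≤ M ∧ ∀ v ∈ V j, x v = M := by
    intro j
    obtain ⟨u, hu, hule⟩ := Finset.exists_max_image (V j) x (hne j)
    refine ⟨x u, hx0 u, ?_⟩
    by_cases hMpos : x u ≤ 0
    · intro v hv
      have h1 : x v ≤ x u := hule v hv
      have h2 := hx0 v
      linarith
    · push_neg at hMpos
      intro v hv
      have hrtg : Relation.ReflTransGen G.adjRel u v := (hcc j u hu v).mp hv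
      clear hv
      induction hrtg with
      | refl => rfl
      | @tail b c hab hbc ih =>
        have hbV : b ∈ V j := (hcc j u hu b).mpr hab
        set M := x u with hMdef
        -- the key equation at b
        have hkey := lap_key_eq hk G hx b
        have hdegcard : (G.edges.filter (fun e => b ∈ e)).card = G.degree b := rfl
        have hsub : ∀ e' ∈ G.edges.filter (fun e => b ∈ e), e' ⊆ V j := by
          intro e' he'
          have := Finset.mem_filter.mp he'
          exact hedge j e' this.1 b this.2 hbV
        have hterm_le : ∀ e' ∈ G.edges.filter (fun e => b ∈ e),
            ∏ w ∈ e'.erase b, x w ≤ M ^ (k - 1) := by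
          intro e' he'
          have hcard : (e'.erase b).card = k - 1 := by
            rw [Finset.card_erase_of_mem (Finset.mem_filter.mp he').2,
              G.card_eq e' (Finset.mem_filter.mp he').1]
          calc ∏ w ∈ e'.erase b, x w ≤ ∏ _w ∈ e'.erase b, M := by
                apply Finset.prod_le_prod
                · intro w _; exact hx0 w
                · intro w hw
                  exact hule w (hsub e' he' (Finset.mem_of_mem_erase hw))
            _ = M ^ (k - 1) := by rw [Finset.prod_const, hcard]
        have hsum_eq : ∑ e' ∈ G.edges.filter (fun e => b ∈ e), ∏ w ∈ e'.erase b, x w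
            = ∑ e' ∈ G.edges.filter (fun e => b ∈ e), M ^ (k - 1) := by
          rw [Finset.sum_const, hdegcard, nsmul_eq_mul, ← hkey, ih]
        have hall := (Finset.sum_eq_sum_iff_of_le hterm_le).mp hsum_eq
        obtain ⟨e, he, hbe, hce⟩ := hbc
        have heF : e ∈ G.edges.filter (fun e => b ∈ e) := Finset.mem_filter.mpr ⟨he, hbe⟩
        have hprod : ∏ w ∈ e.erase b, x w = M ^ (k - 1) := hall e heF
        by_cases hcb : c = b
        · rw [hcb, ih]
        · have hceb : c ∈ e.erase b := Finset.mem_erase.mpr ⟨hcb, hce⟩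
          have hcV : c ∈ V j := hsub e heF hce
          have hcle : x c ≤ M := hule c hcV
          by_contra hne'
          have hclt : x c < M := lt_of_le_of_ne hcle hne'
          have hsplit : x c * ∏ w ∈ (e.erase b).erase c, x w = ∏ w ∈ e.erase b, x w :=
            Finset.mul_prod_erase _ _ hceb
          have hcard2 : ((e.erase b).erase c).card = k - 2 := by
            rw [Finset.card_erase_of_mem hceb,
              Finset.card_erase_of_mem (Finset.mem_filter.mp heF).2, G.card_eq e he]
            omega
          have hQle : ∏ w ∈ (e.erase b).erase c, x w ≤ M ^ (k - 2) := by
            calc ∏ w ∈ (e.erase b).erase c, x w ≤ ∏ _w ∈ (e.erase b).erase c, M := by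
                  apply Finset.prod_le_prod
                  · intro w _; exact hx0 w
                  · intro w hw
                    exact hule w (hsub e heF
                      (Finset.mem_of_mem_erase (Finset.mem_of_mem_erase hw)))
              _ = M ^ (k - 2) := by rw [Finset.prod_const, hcard2]
          have hMk2 : (0:ℝ) < M ^ (k - 2) := pow_pos hMpos _
          have h1 : x c * ∏ w ∈ (e.erase b).erase c, x w ≤ x c * M ^ (k - 2) :=
            mul_le_mul_of_nonneg_left hQle (hx0 c)
          have h2 : x c * M ^ (k - 2) < M * M ^ (k - 2) :=
            mul_lt_mul_of_pos_right hclt hMk2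
          have h3 : M * M ^ (k - 2) = M ^ (k - 1) := by
            rw [← pow_succ']
            congr 1
            omega
          rw [hsplit, hprod] at h1
          linarith
  choose M hM0 hMconst using hmax
  refine ⟨M, hM0, ?_⟩
  funext v
  obtain ⟨j, hvj, huniq⟩ := hpart v
  have hval : x v = M j := hMconst j v hvj
  rw [Finset.sum_apply]
  rw [Finset.sum_eq_single j]
  · simp [indicator, hvj, hval]
  · intro j' _ hj'
    have hnotin : v ∉ V j' := fun h => hj' (huniq j' h)
    simp [indicator, hnotin]
  · intro h; exact absurd (Finset.mem_univ _) h
end
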